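/- Let (U,V) be a cotorsion pair on an extriangulated category B with associated cohomological functor H: B → H̲. For any object B ∈ B, H(B) = 0 if and only if B ∈ add(U ∗ V), i.e. B is a direct summand of an object X admitting a conflation U' ↣ X ↠ V' with U' ∈ U, V' ∈ V. In particular, add(U ∗ V) is an extension-closed subcategory of B. -/

import Mathlib

namespace ExtriHearts

open CategoryTheory CategoryTheory.Limits Opposite

attribute [local instance] CategoryTheory.Limits.hasBinaryBiproducts_of_finite_biproducts

universe v u v₂ u₂

section IdealQuotient

variable {D : Type u₂} [Category.{v₂} D] [Preadditive D]

/-- The subgroup of morphisms `X ⟶ Y` generated by those factoring through an object of `W`. -/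
def wIdeal (W : Set D) (X Y : D) : AddSubgroup (X ⟶ Y) :=
  AddSubgroup.closure {f : X ⟶ Y | ∃ Z ∈ W, ∃ p : X ⟶ Z, ∃ q : Z ⟶ Y, f = p ≫ q}

/-- The hom relation on `D` identifying morphisms whose difference lies in the ideal
generated by morphisms factoring through an object of `W`.  (For an additively closed
subcategory `W` this is the usual relation "`f - g` factors through an object of `W`".) -/
def wRel (W : Set D) : HomRel D := fun {X Y} f g => f - g ∈ wIdeal W X Y

lemma comp_left_mem_wIdeal (W : Set D) {X Y Z : D} (f : X ⟶ Y) {g : Y ⟶ Z}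
    (hg : g ∈ wIdeal W Y Z) : f ≫ g ∈ wIdeal W X Z := by
  have hle : wIdeal W Y Z ≤ (wIdeal W X Z).comap (Preadditive.leftComp Z f) := by
    rw [wIdeal, AddSubgroup.closure_le]
    rintro g ⟨Z₀, hZ₀, p, q, rfl⟩
    exact AddSubgroup.subset_closure ⟨Z₀, hZ₀, f ≫ p, q, by
      simp [Preadditive.leftComp]⟩
  simpa [Preadditive.leftComp] using hle hg

lemma comp_right_mem_wIdeal (W : Set D) {X Y Z : D} {f : X ⟶ Y} (g : Y ⟶ Z)
    (hf : f ∈ wIdeal W X Y) : f ≫ g ∈ wIdeal W X Z := by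
  have hle : wIdeal W X Y ≤ (wIdeal W X Z).comap (Preadditive.rightComp X g) := by
    rw [wIdeal, AddSubgroup.closure_le]
    rintro f ⟨Z₀, hZ₀, p, q, rfl⟩
    exact AddSubgroup.subset_closure ⟨Z₀, hZ₀, p, q ≫ g, by
      simp [Preadditive.rightComp]⟩
  simpa [Preadditive.rightComp] using hle hf

instance wRel_congruence (W : Set D) : Congruence (wRel W) where
  equivalence :=
    { refl := fun f => by
        show f - f ∈ wIdeal W _ _
        simp only [sub_self]
        exact zero_mem _
      symm := fun {f g} h => by
        have h' : f - g ∈ wIdeal W _ _ := h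
        show g - f ∈ wIdeal W _ _
        simpa only [neg_sub] using neg_mem h'
      trans := fun {f g h} h₁ h₂ => by
        have h₁' : f - g ∈ wIdeal W _ _ := h₁
        have h₂' : g - h ∈ wIdeal W _ _ := h₂
        show f - h ∈ wIdeal W _ _
        simpa only [sub_add_sub_cancel] using add_mem h₁' h₂' }
  comp_left := fun {X Y Z} f {g g'} h => by
    have h' : g - g' ∈ wIdeal W _ _ := h
    show f ≫ g - f ≫ g' ∈ wIdeal W _ _
    simpa only [← Preadditive.comp_sub] using comp_left_mem_wIdeal W f h'
  comp_right := fun {X Y Z} {f f'} g h => by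
    have h' : f - f' ∈ wIdeal W _ _ := h
    show f ≫ g - f' ≫ g ∈ wIdeal W _ _
    simpa only [← Preadditive.sub_comp] using comp_right_mem_wIdeal W g h'

/-- The quotient of a preadditive category by (the ideal generated by) the morphisms factoring
through a class of objects `W`. -/
abbrev QuotCat (W : Set D) := CategoryTheory.Quotient (wRel W)

/-- The canonical quotient functor. -/
abbrev toQuot (W : Set D) : D ⥤ QuotCat W := Quotient.functor _

instance quotCatPreadditive (W : Set D) : Preadditive (QuotCat W) :=
  Quotient.preadditive _ (fun X Y f₁ f₂ g₁ g₂ h₁ h₂ => by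
    have h₁' : f₁ - f₂ ∈ wIdeal W X Y := h₁
    have h₂' : g₁ - g₂ ∈ wIdeal W X Y := h₂
    show f₁ + g₁ - (f₂ + g₂) ∈ wIdeal W X Y
    have heq : f₁ + g₁ - (f₂ + g₂) = f₁ - f₂ + (g₁ - g₂) := by abel
    rw [heq]
    exact add_mem h₁' h₂')

end IdealQuotient

section ExtCat

/-- The data of an additive `Ab`-valued bifunctor together with a realization predicate:
`realize δ x y` means that the 3-term sequence `A --x--> X --y--> C` realizes the
`E`-extension `δ ∈ E(C,A)`, i.e. belongs to the equivalence class `s(δ)`. -/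
structure PreExtStruct (B : Type u) [Category.{v} B] [Preadditive B] where
  /-- The additive bifunctor `E : Bᵒᵖ × B → Ab`. -/
  E : Bᵒᵖ ⥤ B ⥤ AddCommGrpCat.{v}

namespace PreExtStruct

variable {B : Type u} [Category.{v} B] [Preadditive B]

/-- The abelian group `E(C,A)` of `E`-extensions of `C` by `A`. -/
abbrev Ext (σ : PreExtStruct B) (C A : B) : AddCommGrpCat.{v} := (σ.E.obj (op C)).obj A

/-- `a_* δ`, the pushforward of an `E`-extension along `a : A ⟶ A'`. -/
def push (σ : PreExtStruct B) {C A A' : B} (a : A ⟶ A') (δ : σ.Ext C A) : σ.Ext C A' :=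
  (σ.E.obj (op C)).map a δ

/-- `c^* δ`, the pullback of an `E`-extension along `c : C' ⟶ C`. -/
def pull (σ : PreExtStruct B) {C' C A : B} (c : C' ⟶ C) (δ : σ.Ext C A) : σ.Ext C' A :=
  (σ.E.map c.op).app A δ

/-- The direct sum `δ ⊕ δ'` of two `E`-extensions, i.e. the element of
`E(C ⊞ C', A ⊞ A')` corresponding to `(δ, 0, 0, δ')`. -/
noncomputable def sumExt (σ : PreExtStruct B) [HasBinaryBiproducts B] {C C' A A' : B}
    (δ : σ.Ext C A) (δ' : σ.Ext C' A') : σ.Ext (C ⊞ C') (A ⊞ A') :=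
  σ.push biprod.inl (σ.pull biprod.fst δ) + σ.push biprod.inr (σ.pull biprod.snd δ')

end PreExtStruct

/-- An *extriangulated category* structure `(E, s)` on an additive category `B`, consisting of
an additive bifunctor `E : Bᵒᵖ × B → Ab` and an additive realization `s` of `E` (encoded by the
predicate `realize`), subject to the axioms (ET1), (ET2), (ET3), (ET3)ᵒᵖ, (ET4), (ET4)ᵒᵖ of
Nakaoka–Palu. -/
structure ExtStruct (B : Type u) [Category.{v} B] [Preadditive B] [HasFiniteBiproducts B]
    extends PreExtStruct B where
  /-- (ET1) `E` is additive in the second variable. -/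
  additive_fst : ∀ Cop : Bᵒᵖ, (E.obj Cop).Additive
  /-- (ET1) `E` is additive in the first variable. -/
  additive_snd : ∀ A : B, (E.flip.obj A).Additive
  /-- `realize δ x y` means the sequence `A --x--> X --y--> C` realizes `δ`, i.e. it belongs to
  the equivalence class `s(δ)`. -/
  realize : ∀ ⦃A C : B⦄, toPreExtStruct.Ext C A → ∀ ⦃X : B⦄, (A ⟶ X) → (X ⟶ C) → Prop
  /-- Every `E`-extension is realized by some sequence. -/
  realize_ex : ∀ ⦃A C : B⦄ (δ : toPreExtStruct.Ext C A),
      ∃ (X : B) (x : A ⟶ X) (y : X ⟶ C), realize δ x y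
  /-- `s(δ)` is closed under the equivalence of sequences. -/
  realize_iso : ∀ ⦃A C X X' : B⦄ (δ : toPreExtStruct.Ext C A) (x : A ⟶ X) (y : X ⟶ C)
      (b : X ≅ X'), realize δ x y → realize δ (x ≫ b.hom) (b.inv ≫ y)
  /-- Any two realizations of `δ` are equivalent sequences. -/
  realize_unique : ∀ ⦃A C X X' : B⦄ (δ : toPreExtStruct.Ext C A) (x : A ⟶ X) (y : X ⟶ C)
      (x' : A ⟶ X') (y' : X' ⟶ C), realize δ x y → realize δ x' y' →
      ∃ b : X ≅ X', x ≫ b.hom = x' ∧ b.hom ≫ y' = y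
  /-- (ET2)(∗) Any morphism of `E`-extensions is realized by a morphism of sequences. -/
  realize_map : ∀ ⦃A C A' C' X X' : B⦄ (δ : toPreExtStruct.Ext C A) (δ' : toPreExtStruct.Ext C' A')
      (x : A ⟶ X) (y : X ⟶ C) (x' : A' ⟶ X') (y' : X' ⟶ C') (a : A ⟶ A') (c : C ⟶ C'),
      realize δ x y → realize δ' x' y' →
      toPreExtStruct.push a δ = toPreExtStruct.pull c δ' →
      ∃ b : X ⟶ X', x ≫ b = a ≫ x' ∧ y ≫ c = b ≫ y'
  /-- (ET2)(i) The split extension is realized by the split sequence. -/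
  realize_zero : ∀ A C : B,
      realize (0 : toPreExtStruct.Ext C A) (biprod.inl : A ⟶ A ⊞ C) (biprod.snd : A ⊞ C ⟶ C)
  /-- (ET2)(ii) Realization is additive. -/
  realize_sum : ∀ ⦃A C A' C' X X' : B⦄ (δ : toPreExtStruct.Ext C A)
      (δ' : toPreExtStruct.Ext C' A') (x : A ⟶ X) (y : X ⟶ C) (x' : A' ⟶ X') (y' : X' ⟶ C'),
      realize δ x y → realize δ' x' y' →
      realize (toPreExtStruct.sumExt δ δ') (biprod.map x x') (biprod.map y y')
  /-- (ET3) -/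
  et3 : ∀ ⦃A C A' C' X X' : B⦄ (δ : toPreExtStruct.Ext C A) (δ' : toPreExtStruct.Ext C' A')
      (x : A ⟶ X) (y : X ⟶ C) (x' : A' ⟶ X') (y' : X' ⟶ C'),
      realize δ x y → realize δ' x' y' → ∀ (a : A ⟶ A') (b : X ⟶ X'), x ≫ b = a ≫ x' →
      ∃ c : C ⟶ C', toPreExtStruct.push a δ = toPreExtStruct.pull c δ' ∧ y ≫ c = b ≫ y'
  /-- (ET3)ᵒᵖ -/
  et3op : ∀ ⦃A C A' C' X X' : B⦄ (δ : toPreExtStruct.Ext C A) (δ' : toPreExtStruct.Ext C' A')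
      (x : A ⟶ X) (y : X ⟶ C) (x' : A' ⟶ X') (y' : X' ⟶ C'),
      realize δ x y → realize δ' x' y' → ∀ (b : X ⟶ X') (c : C ⟶ C'), y ≫ c = b ≫ y' →
      ∃ a : A ⟶ A', toPreExtStruct.push a δ = toPreExtStruct.pull c δ' ∧ x ≫ b = a ≫ x'
  /-- (ET4) -/
  et4 : ∀ ⦃A B₀ D C F : B⦄ (δ : toPreExtStruct.Ext D A) (f : A ⟶ B₀) (f' : B₀ ⟶ D)
      (δ' : toPreExtStruct.Ext F B₀) (g : B₀ ⟶ C) (g' : C ⟶ F),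
      realize δ f f' → realize δ' g g' →
      ∃ (E₀ : B) (d : D ⟶ E₀) (e : E₀ ⟶ F) (h' : C ⟶ E₀) (δ'' : toPreExtStruct.Ext E₀ A),
        g ≫ h' = f' ≫ d ∧ h' ≫ e = g' ∧
        realize δ'' (f ≫ g) h' ∧ realize (toPreExtStruct.push f' δ') d e ∧
        toPreExtStruct.pull d δ'' = δ ∧ toPreExtStruct.push f δ'' = toPreExtStruct.pull e δ'
  /-- (ET4)ᵒᵖ -/
  et4op : ∀ ⦃F C B₀ D A : B⦄ (δ' : toPreExtStruct.Ext B₀ F) (s : F ⟶ C) (t : C ⟶ B₀)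
      (δ : toPreExtStruct.Ext A D) (u : D ⟶ B₀) (v : B₀ ⟶ A),
      realize δ' s t → realize δ u v →
      ∃ (E₀ : B) (e : F ⟶ E₀) (d : E₀ ⟶ D) (m : E₀ ⟶ C) (δ'' : toPreExtStruct.Ext A E₀),
        m ≫ t = d ≫ u ∧ e ≫ m = s ∧
        realize δ'' m (t ≫ v) ∧ realize (toPreExtStruct.pull u δ') e d ∧
        toPreExtStruct.push d δ'' = δ ∧
        toPreExtStruct.pull v δ'' = toPreExtStruct.push e δ'

namespace ExtStruct

variable {B : Type u} [Category.{v} B] [Preadditive B] [HasFiniteBiproducts B] (σ : ExtStruct B)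

/-- A sequence `A --x--> X --y--> C` is a conflation if it realizes some `E`-extension. -/
def Conflation {A X C : B} (x : A ⟶ X) (y : X ⟶ C) : Prop :=
  ∃ δ : σ.Ext C A, σ.realize δ x y

/-- `Cone(D₁, D₂)`: objects `X` admitting a conflation `D₁ ↣ D₂ ↠ X`. -/
def Cone (D₁ D₂ : Set B) : Set B :=
  {X | ∃ (A Y : B) (f : A ⟶ Y) (g : Y ⟶ X), A ∈ D₁ ∧ Y ∈ D₂ ∧ σ.Conflation f g}

/-- `CoCone(D₁, D₂)`: objects `X` admitting a conflation `X ↣ D₁ ↠ D₂`. -/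
def CoCone (D₁ D₂ : Set B) : Set B :=
  {X | ∃ (Y C : B) (f : X ⟶ Y) (g : Y ⟶ C), Y ∈ D₁ ∧ C ∈ D₂ ∧ σ.Conflation f g}

/-- `D₁ ∗ D₂`: objects `X` admitting a conflation `D₁ ↣ X ↠ D₂`. -/
def star (D₁ D₂ : Set B) : Set B :=
  {X | ∃ (A C : B) (f : A ⟶ X) (g : X ⟶ C), A ∈ D₁ ∧ C ∈ D₂ ∧ σ.Conflation f g}

/-- `add(D₁ ∗ D₂)`: direct summands of objects of `D₁ ∗ D₂`. -/
def addStar (D₁ D₂ : Set B) : Set B :=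
  {X | ∃ Y ∈ σ.star D₁ D₂, ∃ (s : X ⟶ Y) (r : Y ⟶ X), s ≫ r = 𝟙 X}

/-- An object `P` is projective if `E(P, −) = 0`. -/
def IsProj (P : B) : Prop := ∀ (A : B) (δ : σ.Ext P A), δ = 0

/-- An object `I` is injective if `E(−, I) = 0`. -/
def IsInj (I : B) : Prop := ∀ (C : B) (δ : σ.Ext C I), δ = 0

/-- The class of projective objects. -/
def projs : Set B := {P | σ.IsProj P}

/-- `B` has enough projectives: every object admits a deflation from a projective. -/
def EnoughProj : Prop :=
  ∀ X : B, ∃ (P K : B) (i : K ⟶ P) (p : P ⟶ X), σ.IsProj P ∧ σ.Conflation i p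

/-- `B` has enough injectives: every object admits an inflation into an injective. -/
def EnoughInj : Prop :=
  ∀ X : B, ∃ (I C : B) (i : X ⟶ I) (p : I ⟶ C), σ.IsInj I ∧ σ.Conflation i p

end ExtStruct

/-- A full additive subcategory (given as a class of objects), closed under isomorphisms and
direct summands. -/
structure AddClosed {B : Type u} [Category.{v} B] [Preadditive B] [HasFiniteBiproducts B]
    (U : Set B) : Prop where
  zero_mem : ∀ Z : B, IsZero Z → Z ∈ U
  biprod_mem : ∀ X Y : B, X ∈ U → Y ∈ U → (X ⊞ Y) ∈ U
  summand_mem : ∀ X Y : B, Y ∈ U → ∀ (s : X ⟶ Y) (r : Y ⟶ X), s ≫ r = 𝟙 X → X ∈ U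

namespace ExtStruct

variable {B : Type u} [Category.{v} B] [Preadditive B] [HasFiniteBiproducts B] (σ : ExtStruct B)

/-- A (complete) cotorsion pair `(U, V)` on an extriangulated category. -/
structure IsCotorsionPair (U V : Set B) : Prop where
  addU : AddClosed U
  addV : AddClosed V
  ext_vanish : ∀ ⦃X : B⦄, X ∈ U → ∀ ⦃Y : B⦄, Y ∈ V → ∀ δ : σ.Ext X Y, δ = 0
  resolve : ∀ X : B, ∃ (V₀ U₀ : B) (f : V₀ ⟶ U₀) (g : U₀ ⟶ X),
      V₀ ∈ V ∧ U₀ ∈ U ∧ σ.Conflation f g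
  coresolve : ∀ X : B, ∃ (V₀ U₀ : B) (f : X ⟶ V₀) (g : V₀ ⟶ U₀),
      V₀ ∈ V ∧ U₀ ∈ U ∧ σ.Conflation f g

/-- A twin cotorsion pair `((S,T), (U,V))`. -/
structure IsTwinCotorsionPair (S T U V : Set B) : Prop where
  fst : σ.IsCotorsionPair S T
  snd : σ.IsCotorsionPair U V
  ext_SV : ∀ ⦃X : B⦄, X ∈ S → ∀ ⦃Y : B⦄, Y ∈ V → ∀ δ : σ.Ext X Y, δ = 0

section Twin

variable (S T U V : Set B)

/-- `B⁺ = Cone(V, W)` for the core `W = T ∩ U` of a twin cotorsion pair. -/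
def tPos : Set B := σ.Cone V (T ∩ U)

/-- `B⁻ = CoCone(W, S)` for the core `W = T ∩ U` of a twin cotorsion pair. -/
def tNeg : Set B := σ.CoCone (T ∩ U) S

/-- The class of objects of the heart `H = B⁺ ∩ B⁻` of a twin cotorsion pair. -/
def tHeartSet : Set B := σ.tPos T U V ∩ σ.tNeg S T U

/-- The heart `H/W` of a twin cotorsion pair, as a full subcategory of the quotient
category `B/W`. -/
abbrev THeart := ObjectProperty.FullSubcategory (fun X : QuotCat (T ∩ U : Set B) => X.as ∈ σ.tHeartSet S T U V)

/-- A *reflection sequence* for `B₀`: a conflation `B₀ ↣ Z ↠ S₀` with `Z ∈ B⁺`, `S₀ ∈ S`,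
such that `z^* : E(Z, V₀) → E(B₀, V₀)` is surjective for every `V₀ ∈ V`. -/
def IsReflectionSeq {B₀ Z S₀ : B} (z : B₀ ⟶ Z) (w : Z ⟶ S₀) : Prop :=
  Z ∈ σ.tPos T U V ∧ S₀ ∈ S ∧ σ.Conflation z w ∧
    ∀ ⦃V₀ : B⦄, V₀ ∈ V → Function.Surjective (fun δ : σ.Ext Z V₀ => σ.pull z δ)

/-- A *coreflection sequence* for `B₀`: a conflation `V₀ ↣ X ↠ B₀` with `X ∈ B⁻`, `V₀ ∈ V`,
such that `x_* : E(S₀, X) → E(S₀, B₀)` is surjective for every `S₀ ∈ S`. -/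
def IsCoreflectionSeq {V₀ X B₀ : B} (v : V₀ ⟶ X) (x : X ⟶ B₀) : Prop :=
  X ∈ σ.tNeg S T U ∧ V₀ ∈ V ∧ σ.Conflation v x ∧
    ∀ ⦃S₀ : B⦄, S₀ ∈ S → Function.Surjective (fun δ : σ.Ext S₀ X => σ.push x δ)

end Twin

section Single

variable (U V : Set B)

/-- `B⁺` for a single cotorsion pair `(U,V)`, with core `W = U ∩ V`. -/
def sPos : Set B := σ.Cone V (U ∩ V)

/-- `B⁻` for a single cotorsion pair `(U,V)`, with core `W = U ∩ V`. -/
def sNeg : Set B := σ.CoCone (U ∩ V) U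

/-- The class of objects of the heart of a single cotorsion pair. -/
def sHeartSet : Set B := σ.sPos U V ∩ σ.sNeg U V

/-- The heart `H/W` of a cotorsion pair `(U,V)`, a full subcategory of `B/W`, `W = U ∩ V`. -/
abbrev SHeart := ObjectProperty.FullSubcategory (fun X : QuotCat (U ∩ V : Set B) => X.as ∈ σ.sHeartSet U V)

/-- The inclusion of the heart into the quotient category `B/W`. -/
abbrev sHeartIncl : σ.SHeart U V ⥤ QuotCat (U ∩ V : Set B) := ObjectProperty.ι _

/-- The kernel `K = add(U ∗ V)` of a cotorsion pair. -/
def kernelSet : Set B := σ.addStar U V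

/-- The coheart `C = ⊥₁K` of a cotorsion pair. -/
def coheart : Set B := {X | ∀ ⦃K : B⦄, K ∈ σ.kernelSet U V → ∀ δ : σ.Ext X K, δ = 0}

/-- An object of the heart determined by an object of `B` lying in `B⁺ ∩ B⁻`. -/
def sHeartObj {X : B} (hX : X ∈ σ.sHeartSet U V) : σ.SHeart U V :=
  ⟨(toQuot (U ∩ V : Set B)).obj X, hX⟩

/-- The image in the heart of a morphism of `B` between objects of `B⁺ ∩ B⁻`. -/
def sHeartHom {X Y : B} (hX : X ∈ σ.sHeartSet U V) (hY : Y ∈ σ.sHeartSet U V) (f : X ⟶ Y) :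
    σ.sHeartObj U V hX ⟶ σ.sHeartObj U V hY :=
  ⟨(toQuot (U ∩ V : Set B)).map f⟩

end Single

end ExtStruct

end ExtCat

section More

variable {B : Type u} [Category.{v} B] [Preadditive B] [HasFiniteBiproducts B]

namespace ExtStruct

variable (σ : ExtStruct B)

/-- `Ω D₀ = CoCone(P, D₀)`, the syzygy class of a class of objects `D₀`. -/
def omegaSet (D₀ : Set B) : Set B := σ.CoCone σ.projs D₀

/-- A choice of iterated syzygies of `X`: `Z 0 = X` and for each `i` there is a conflation
`Z (i+1) ↣ P ↠ Z i` with `P` projective. -/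
def SyzygyChain (X : B) (Z : ℕ → B) : Prop :=
  Z 0 = X ∧ ∀ i : ℕ, ∃ (P : B) (f : Z (i + 1) ⟶ P) (g : P ⟶ Z i),
    σ.IsProj P ∧ σ.Conflation f g

/-- A choice of iterated cosyzygies of `Y`: `Z 0 = Y` and for each `i` there is a conflation
`Z i ↣ I ↠ Z (i+1)` with `I` injective. -/
def CosyzygyChain (Y : B) (Z : ℕ → B) : Prop :=
  Z 0 = Y ∧ ∀ i : ℕ, ∃ (I : B) (f : Z i ⟶ I) (g : I ⟶ Z (i + 1)),
    σ.IsInj I ∧ σ.Conflation f g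

/-- Vanishing of the higher extension group `E^{i+1}(X, Y) = E(X, Σ^i Y)`, expressed via
cosyzygy chains.  (`hExtVanish σ X Y 0` is the vanishing of `E(X,Y)` itself.) -/
def hExtVanish (X Y : B) (i : ℕ) : Prop :=
  ∀ Z : ℕ → B, σ.CosyzygyChain Y Z → ∀ δ : σ.Ext X (Z i), δ = 0

/-- `Σ^j D₀`: the class of `j`-th cosyzygies of objects of `D₀`. -/
def sigmaSet (j : ℕ) (D₀ : Set B) : Set B :=
  {X | ∃ Y ∈ D₀, ∃ Z : ℕ → B, σ.CosyzygyChain Y Z ∧ Z j = X}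

/-- An `n`-cluster tilting subcategory of an extriangulated category:
it is functorially finite, and `X ∈ M` iff `E^i(X, M) = 0` for `1 ≤ i ≤ n - 1`,
iff `E^i(M, X) = 0` for `1 ≤ i ≤ n - 1`. -/
structure IsNClusterTilting (n : ℕ) (M : Set B) : Prop where
  contravariantly_finite : ∀ X : B, ∃ M₀ ∈ M, ∃ f : M₀ ⟶ X,
      ∀ M₁ ∈ M, ∀ g : M₁ ⟶ X, ∃ h : M₁ ⟶ M₀, h ≫ f = g
  covariantly_finite : ∀ X : B, ∃ M₀ ∈ M, ∃ f : X ⟶ M₀,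
      ∀ M₁ ∈ M, ∀ g : X ⟶ M₁, ∃ h : M₀ ⟶ M₁, f ≫ h = g
  mem_iff_vanish_left : ∀ X : B,
      X ∈ M ↔ ∀ i : ℕ, i ≤ n - 2 → ∀ Y ∈ M, σ.hExtVanish X Y i
  mem_iff_vanish_right : ∀ X : B,
      X ∈ M ↔ ∀ i : ℕ, i ≤ n - 2 → ∀ Y ∈ M, σ.hExtVanish Y X i

/-- `mlev σ M k` is the subcategory `M_{k+1}` of the paper: `M_1 = M` and
`M_{ℓ} = Cone(M_{ℓ-1}, M)`. -/
def mlev (M : Set B) : ℕ → Set B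
  | 0 => M
  | (k + 1) => σ.Cone (mlev M k) M

end ExtStruct

section Reflectors

variable (W P N : Set B)

/-- The data of a reflection functor `σ⁺` onto the objects of `B⁺` (given by the class `P`),
i.e. a left adjoint of the inclusion of the full subcategory of `B/W` on `P` in the bijection
formulation: composing with the unit `B → σ⁺B` gives bijections
`(σ⁺X ⟶ Y) ≃ (X ⟶ Y)` for all `Y` lying in `P`. -/
structure ReflectorData where
  σp : QuotCat W ⥤ QuotCat W
  mem : ∀ X : QuotCat W, (σp.obj X).as ∈ P
  unit : 𝟭 (QuotCat W) ⟶ σp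
  bij : ∀ (X Y : QuotCat W), Y.as ∈ P →
      Function.Bijective (fun g : (σp.obj X ⟶ Y) => unit.app X ≫ g)

/-- The data of a coreflection functor `σ⁻` onto the objects of `B⁻` (given by the class `N`). -/
structure CoreflectorData where
  σm : QuotCat W ⥤ QuotCat W
  mem : ∀ X : QuotCat W, (σm.obj X).as ∈ N
  counit : σm ⟶ 𝟭 (QuotCat W)
  bij : ∀ (X Y : QuotCat W), X.as ∈ N →
      Function.Bijective (fun g : (X ⟶ σm.obj Y) => g ≫ counit.app Y)

end Reflectors

namespace ExtStruct

variable (σ : ExtStruct B)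

/-- The data of the cohomological functor `H = σ⁻ ∘ σ⁺ ∘ π : B → H` associated to a cotorsion
pair `(U, V)`: reflection and coreflection functors together with a functor `H` to the heart
which is isomorphic to `σ⁻ ∘ σ⁺ ∘ π` after composition with the inclusion of the heart. -/
structure HeartFunctorData (U V : Set B) where
  refl : ReflectorData (B := B) (U ∩ V) (σ.sPos U V)
  corefl : CoreflectorData (B := B) (U ∩ V) (σ.sNeg U V)
  H : B ⥤ σ.SHeart U V
  iso : (H ⋙ σ.sHeartIncl U V) ≅ (toQuot (U ∩ V : Set B) ⋙ refl.σp ⋙ corefl.σm)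

end ExtStruct

section Mod

variable (D : Type u₂) [Category.{v₂} D] [Preadditive D]

/-- A coherent (finitely presented) functor `Dᵒᵖ ⥤ Ab`: one admitting an exact presentation
`Hom(−,X) → Hom(−,Y) → F → 0`. -/
def IsCoherent (F : Dᵒᵖ ⥤ AddCommGrpCat.{v₂}) : Prop :=
  ∃ (X Y : D) (f : X ⟶ Y) (η : preadditiveYoneda.obj Y ⟶ F),
    (∀ A : D, Function.Surjective (η.app (op A))) ∧
    (∀ (A : D) (g : A ⟶ Y), η.app (op A) g = 0 ↔ ∃ h : A ⟶ X, h ≫ f = g)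

/-- `mod D`: the category of coherent functors `Dᵒᵖ ⥤ Ab`. -/
abbrev ModCat := ObjectProperty.FullSubcategory (fun F : Dᵒᵖ ⥤ AddCommGrpCat.{v₂} => IsCoherent D F)

end Mod

/-- The additive quotient `C/P` of the full subcategory of `B` on a class `C₀` of objects by
(the ideal of) morphisms factoring through objects satisfying `P₀`. -/
abbrev StableCat (C₀ P₀ : Set B) :=
  QuotCat (D := ObjectProperty.FullSubcategory (fun X : B => X ∈ C₀)) {Z | Z.obj ∈ P₀}

end More

/-!
Whether `H` kills `X` is read off a reflection sequence `X ↣ Z ↠ U₀` (`U₀ ∈ U`, `Z ∈ B⁺`,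
`z^* : E(Z, V₀) → E(X, V₀)` onto for `V₀ ∈ V`): the object `Z` computes `σ⁺X` in `B/W`, and
`σ⁻T` vanishes exactly when every morphism from `B⁻` to `T` factors through `W`, a property that
characterises the objects of `V`. Hence `H(X) = 0` iff `Z ∈ V`. If `Z ∈ V`, pulling a resolution
`V_X ↣ U_X ↠ X` back along `z` exhibits `X` as a summand of an object of `U ∗ V`; conversely every
object of `U ∗ V` has a reflection sequence with `Z ∈ V`, and `H` kills direct summands.

Extension closure: `∗` is associative (ET4 and its dual), `V ∗ U ⊆ U ∗ V` because `E(U, V) = 0`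
splits such conflations, and `U`, `V` are extension-closed, so `(U ∗ V) ∗ (U ∗ V) ⊆ U ∗ V`;
summands are handled by comparing a conflation with its pullback and pushout along retractions.
-/

section Quotient

open ZeroObject

variable {B : Type u} [Category.{v} B] [Preadditive B] {W : Set B}

lemma mem_wIdeal_of_factor {X Y Z : B} (hZ : Z ∈ W) (p : X ⟶ Z) (q : Z ⟶ Y) :
    p ≫ q ∈ wIdeal W X Y :=
  AddSubgroup.subset_closure ⟨Z, hZ, p, q, rfl⟩

lemma mem_wIdeal_iff [HasFiniteBiproducts B] (hW : AddClosed W) {X Y : B} (f : X ⟶ Y) :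
    f ∈ wIdeal W X Y ↔ ∃ Z ∈ W, ∃ p : X ⟶ Z, ∃ q : Z ⟶ Y, f = p ≫ q := by
  refine ⟨fun hf => ?_, fun ⟨Z, hZ, p, q, hf⟩ => hf ▸ mem_wIdeal_of_factor hZ p q⟩
  induction hf using AddSubgroup.closure_induction with
  | mem f hf => exact hf
  | zero => exact ⟨0, hW.zero_mem _ (isZero_zero B), 0, 0, by simp⟩
  | add f g _ _ hf hg =>
    obtain ⟨Z₁, hZ₁, p₁, q₁, rfl⟩ := hf
    obtain ⟨Z₂, hZ₂, p₂, q₂, rfl⟩ := hg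
    exact ⟨Z₁ ⊞ Z₂, hW.biprod_mem _ _ hZ₁ hZ₂, biprod.lift p₁ p₂, biprod.desc q₁ q₂, by simp⟩
  | neg f _ hf =>
    obtain ⟨Z, hZ, p, q, rfl⟩ := hf
    exact ⟨Z, hZ, -p, q, by simp⟩

lemma toQuot_map_eq_zero_iff {X Y : B} (f : X ⟶ Y) :
    (toQuot W).map f = 0 ↔ f ∈ wIdeal W X Y := by
  change (toQuot W).map f = (toQuot W).map 0 ↔ _
  rw [Quotient.functor_map_eq_iff]
  change f - 0 ∈ wIdeal W X Y ↔ _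
  rw [sub_zero]

lemma forall_toQuot_hom_eq_zero_iff {S : Set B} {Z : B} :
    (∀ N : QuotCat W, N.as ∈ S → ∀ f : N ⟶ (toQuot W).obj Z, f = 0) ↔
      ∀ N ∈ S, ∀ f : N ⟶ Z, f ∈ wIdeal W N Z := by
  refine ⟨fun h N hN f => (toQuot_map_eq_zero_iff f).1 (h _ hN _), fun h N hN f => ?_⟩
  obtain ⟨f, rfl⟩ := (toQuot W).map_surjective (X := N.as) f
  exact (toQuot_map_eq_zero_iff f).2 (h N.as hN f)

end Quotient

section Reflectors

variable {B : Type u} [Category.{v} B] [Preadditive B] {W P N : Set B}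

lemma ReflectorData.nonempty_iso (R : ReflectorData W P) {X Z : QuotCat W} (hZ : Z.as ∈ P)
    (ζ : X ⟶ Z) (hζ : ∀ Y : QuotCat W, Y.as ∈ P → Function.Bijective fun g : Z ⟶ Y => ζ ≫ g) :
    Nonempty (R.σp.obj X ≅ Z) := by
  obtain ⟨φ, hφ⟩ := (R.bij X Z hZ).2 ζ
  obtain ⟨ψ, hψ⟩ := (hζ _ (R.mem X)).2 (R.unit.app X)
  dsimp only at hφ hψ
  refine ⟨⟨φ, ψ, (R.bij X _ (R.mem X)).1 ?_, (hζ Z hZ).1 ?_⟩⟩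
  · dsimp only
    rw [reassoc_of% hφ, hψ, Category.comp_id]
  · dsimp only
    rw [reassoc_of% hψ, hφ, Category.comp_id]

lemma CoreflectorData.isZero_obj_iff (R : CoreflectorData W N) (T : QuotCat W) :
    IsZero (R.σm.obj T) ↔ ∀ M : QuotCat W, M.as ∈ N → ∀ f : M ⟶ T, f = 0 := by
  refine ⟨fun h M hM f => ?_, fun h => ?_⟩
  · obtain ⟨g, rfl⟩ := (R.bij M T hM).2 f
    dsimp only
    rw [h.eq_of_tgt g 0, zero_comp]
  · rw [IsZero.iff_id_eq_zero]
    refine (R.bij _ T (R.mem T)).1 ?_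
    dsimp only
    rw [Category.id_comp, zero_comp]
    exact h _ (R.mem T) _

end Reflectors

namespace ExtStruct

open ZeroObject

variable {B : Type u} [Category.{v} B] [Preadditive B] [HasFiniteBiproducts B] {σ : ExtStruct B}

section ExtAlgebra

lemma pull_pull {C'' C' C A : B} (c' : C'' ⟶ C') (c : C' ⟶ C) (δ : σ.Ext C A) :
    σ.pull c' (σ.pull c δ) = σ.pull (c' ≫ c) δ := by
  simp only [PreExtStruct.pull, op_comp, σ.E.map_comp, NatTrans.comp_app]
  rfl

lemma push_push {C A A' A'' : B} (a : A ⟶ A') (a' : A' ⟶ A'') (δ : σ.Ext C A) :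
    σ.push a' (σ.push a δ) = σ.push (a ≫ a') δ := by
  change ((σ.E.obj (op C)).map a ≫ (σ.E.obj (op C)).map a') δ = _
  rw [← Functor.map_comp]
  rfl

lemma push_pull {C' C A A' : B} (c : C' ⟶ C) (a : A ⟶ A') (δ : σ.Ext C A) :
    σ.push a (σ.pull c δ) = σ.pull c (σ.push a δ) := by
  change ((σ.E.map c.op).app A ≫ (σ.E.obj (op C')).map a) δ =
    ((σ.E.obj (op C)).map a ≫ (σ.E.map c.op).app A') δ
  rw [NatTrans.naturality]

@[simp] lemma push_id {C A : B} (δ : σ.Ext C A) : σ.push (𝟙 A) δ = δ := by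
  simp only [PreExtStruct.push, (σ.E.obj (op C)).map_id]; rfl

@[simp] lemma pull_id {C A : B} (δ : σ.Ext C A) : σ.pull (𝟙 C) δ = δ := by
  simp only [PreExtStruct.pull, op_id, σ.E.map_id]; rfl

@[simp] lemma push_zero {C A A' : B} (a : A ⟶ A') : σ.push a (0 : σ.Ext C A) = 0 :=
  map_zero _

@[simp] lemma pull_zero {C' C A : B} (c : C' ⟶ C) : σ.pull c (0 : σ.Ext C A) = 0 :=
  map_zero _

lemma pull_zero_hom {C' C A : B} (δ : σ.Ext C A) : σ.pull (0 : C' ⟶ C) δ = 0 := by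
  have := σ.additive_snd A
  change (σ.E.flip.obj A).map (0 : op C ⟶ op C') δ = 0
  rw [Functor.map_zero]
  rfl

end ExtAlgebra

section Conflations

variable {A X C : B}

lemma exists_lift_of_pull_eq_zero {δ : σ.Ext C A} {x : A ⟶ X} {y : X ⟶ C} (h : σ.realize δ x y)
    {T : B} (f : T ⟶ C) (hf : σ.pull f δ = 0) : ∃ g : T ⟶ X, g ≫ y = f := by
  obtain ⟨b, -, hb⟩ := σ.realize_map (0 : σ.Ext T A) δ biprod.inl biprod.snd x y (𝟙 A) f
    (σ.realize_zero A T) h (by simp [hf])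
  exact ⟨biprod.inr ≫ b, by simpa using (biprod.inr ≫= hb).symm⟩

lemma exists_extend_of_push_eq_zero {δ : σ.Ext C A} {x : A ⟶ X} {y : X ⟶ C}
    (h : σ.realize δ x y) {T : B} (f : A ⟶ T) (hf : σ.push f δ = 0) :
    ∃ g : X ⟶ T, x ≫ g = f := by
  obtain ⟨b, hb, -⟩ := σ.realize_map δ (0 : σ.Ext C T) x y biprod.inl biprod.snd f (𝟙 C)
    h (σ.realize_zero T C) (by simp [hf])
  exact ⟨b ≫ biprod.fst, by rw [reassoc_of% hb]; simp⟩

lemma realize_zero_of_zero_left (Y : B) :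
    σ.realize (0 : σ.Ext Y (0 : B)) (0 : (0 : B) ⟶ Y) (𝟙 Y) := by
  convert σ.realize_iso 0 biprod.inl biprod.snd (Iso.mk (Y := Y) biprod.snd biprod.inr
    (biprod.hom_ext _ _ ((isZero_zero B).eq_of_tgt _ _) (by simp))) (σ.realize_zero _ _)
  · exact (isZero_zero B).eq_of_src _ _
  · simp

lemma exists_desc_of_comp_eq_zero {δ : σ.Ext C A} {x : A ⟶ X} {y : X ⟶ C}
    (h : σ.realize δ x y) {T : B} (φ : X ⟶ T) (hφ : x ≫ φ = 0) : ∃ ψ : C ⟶ T, y ≫ ψ = φ := by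
  obtain ⟨c, -, hc⟩ := σ.et3 δ (0 : σ.Ext T (0 : B)) x y (0 : (0 : B) ⟶ T) (𝟙 T)
    h (realize_zero_of_zero_left T) (0 : A ⟶ (0 : B)) φ (by simp [hφ])
  exact ⟨c, by simpa using hc⟩

lemma exists_retraction_of_realize_zero {x : A ⟶ X} {y : X ⟶ C}
    (h : σ.realize (0 : σ.Ext C A) x y) : ∃ r : X ⟶ A, x ≫ r = 𝟙 A := by
  obtain ⟨b, hb, -⟩ := σ.realize_unique 0 x y biprod.inl biprod.snd h (σ.realize_zero A C)
  exact ⟨b.hom ≫ biprod.fst, by rw [reassoc_of% hb]; simp⟩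

lemma exists_section_of_realize_zero {x : A ⟶ X} {y : X ⟶ C}
    (h : σ.realize (0 : σ.Ext C A) x y) : ∃ s : C ⟶ X, s ≫ y = 𝟙 C := by
  obtain ⟨b, -, hb⟩ := σ.realize_unique 0 x y biprod.inl biprod.snd h (σ.realize_zero A C)
  exact ⟨biprod.inr ≫ b.inv, by rw [Category.assoc, b.inv_comp_eq.2 hb.symm]; simp⟩

lemma exists_pull_eq_of_pull_eq_zero {δ : σ.Ext C A} {x : A ⟶ X} {y : X ⟶ C}
    (h : σ.realize δ x y) {T : B} (ε : σ.Ext X T) (hε : σ.pull x ε = 0) :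
    ∃ ε' : σ.Ext C T, σ.pull y ε' = ε := by
  obtain ⟨M, m, e, hm⟩ := σ.realize_ex ε
  obtain ⟨_, _, _, _, δ'', -, -, -, hre, -, hδ''⟩ := σ.et4op ε m e δ x y hm h
  rw [hε] at hre
  obtain ⟨r, hr⟩ := exists_retraction_of_realize_zero hre
  exact ⟨σ.push r δ'', by rw [← push_pull, hδ'', push_push, hr, push_id]⟩

lemma exists_push_eq_of_push_eq_zero {δ : σ.Ext C A} {x : A ⟶ X} {y : X ⟶ C}
    (h : σ.realize δ x y) {T : B} (ε : σ.Ext T X) (hε : σ.push y ε = 0) :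
    ∃ ε' : σ.Ext T A, σ.push x ε' = ε := by
  obtain ⟨P, p, q, hp⟩ := σ.realize_ex ε
  obtain ⟨_, _, _, _, δ'', -, -, -, hre, -, hδ''⟩ := σ.et4 δ x y ε p q h hp
  rw [hε] at hre
  obtain ⟨s, hs⟩ := exists_section_of_realize_zero hre
  exact ⟨σ.pull s δ'', by rw [push_pull, hδ'', pull_pull, hs, pull_id]⟩

lemma exists_eq_push_of_pull_eq_zero {δ : σ.Ext C A} {x : A ⟶ X} {y : X ⟶ C}
    (h : σ.realize δ x y) {T : B} (ρ : σ.Ext C T) (hρ : σ.pull y ρ = 0) :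
    ∃ g : A ⟶ T, ρ = σ.push g δ := by
  obtain ⟨M, m, e, hm⟩ := σ.realize_ex ρ
  obtain ⟨l, hl⟩ := exists_lift_of_pull_eq_zero hm y hρ
  obtain ⟨a, ha, -⟩ := σ.et3op δ ρ x y m e h hm l (𝟙 C) (by rw [Category.comp_id, hl])
  exact ⟨a, by rw [ha, pull_id]⟩

lemma exists_eq_pull_of_push_eq_zero {δ : σ.Ext C A} {x : A ⟶ X} {y : X ⟶ C}
    (h : σ.realize δ x y) {T : B} (ρ : σ.Ext T A) (hρ : σ.push x ρ = 0) :
    ∃ g : T ⟶ C, ρ = σ.pull g δ := by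
  obtain ⟨M, m, e, hm⟩ := σ.realize_ex ρ
  obtain ⟨l, hl⟩ := exists_extend_of_push_eq_zero hm x hρ
  obtain ⟨c, hc, -⟩ := σ.et3 ρ δ m e x y hm h (𝟙 A) l (by rw [hl, Category.id_comp])
  exact ⟨c, by rw [← hc, push_id]⟩

/-- `𝟙 - b` kills `x`, so it factors as `y ≫ ψ`; then `y ≫ ψ` is square-zero and
`b = 𝟙 - y ≫ ψ` has inverse `𝟙 + y ≫ ψ`. -/
lemma isIso_of_endo {δ : σ.Ext C A} {x : A ⟶ X} {y : X ⟶ C} (h : σ.realize δ x y)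
    (b : X ⟶ X) (hx : x ≫ b = x) (hy : b ≫ y = y) : IsIso b := by
  obtain ⟨ψ, hψ⟩ := exists_desc_of_comp_eq_zero h (𝟙 X - b) (by simp [hx])
  have hψy : (y ≫ ψ) ≫ y = 0 := by rw [hψ]; simp [hy]
  have hnil : (y ≫ ψ) ≫ (y ≫ ψ) = 0 := by rw [← Category.assoc, hψy, zero_comp]
  have hb : b = 𝟙 X - y ≫ ψ := by rw [hψ]; abel
  refine ⟨𝟙 X + y ≫ ψ, ?_, ?_⟩ <;>
  · rw [hb]
    simp only [Preadditive.sub_comp, Preadditive.add_comp, Preadditive.comp_add,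
      Preadditive.comp_sub, Category.id_comp, Category.comp_id, hnil]
    abel

lemma exists_retract_middle {A' X' C' : B} {δ : σ.Ext C A} {δ' : σ.Ext C' A'}
    {x : A ⟶ X} {y : X ⟶ C} {x' : A' ⟶ X'} {y' : X' ⟶ C'}
    (h : σ.realize δ x y) (h' : σ.realize δ' x' y')
    {a : A ⟶ A'} {a' : A' ⟶ A} {c : C ⟶ C'} {c' : C' ⟶ C} (ha : a ≫ a' = 𝟙 A)
    (hc : c ≫ c' = 𝟙 C) (hδ : σ.push a δ = σ.pull c δ') (hδ' : σ.push a' δ' = σ.pull c' δ) :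
    ∃ (s : X ⟶ X') (r : X' ⟶ X), s ≫ r = 𝟙 X := by
  obtain ⟨b, hb₁, hb₂⟩ := σ.realize_map δ δ' x y x' y' a c h h' hδ
  obtain ⟨b', hb'₁, hb'₂⟩ := σ.realize_map δ' δ x' y' x y a' c' h' h hδ'
  have : IsIso (b ≫ b') := isIso_of_endo h _
    (by rw [reassoc_of% hb₁, hb'₁, reassoc_of% ha])
    (by rw [Category.assoc, ← hb'₂, ← Category.assoc, ← hb₂, Category.assoc, hc,
      Category.comp_id])
  exact ⟨b, b' ≫ inv (b ≫ b'), by rw [← Category.assoc, IsIso.hom_inv_id]⟩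

end Conflations

section Pullback

lemma realize_zero_lift_id {C₁ C₂ : B} (c : C₁ ⟶ C₂) :
    ∃ v₀ : C₁ ⊞ C₂ ⟶ C₂, σ.realize (0 : σ.Ext C₂ C₁) (biprod.lift (𝟙 C₁) c) v₀ := by
  let e : C₁ ⊞ C₂ ≅ C₁ ⊞ C₂ :=
    { hom := biprod.desc (biprod.lift (𝟙 C₁) c) biprod.inr
      inv := biprod.desc (biprod.lift (𝟙 C₁) (-c)) biprod.inr
      hom_inv_id := by
        apply biprod.hom_ext' <;> apply biprod.hom_ext <;> simp [Preadditive.add_comp]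
      inv_hom_id := by
        apply biprod.hom_ext' <;> apply biprod.hom_ext <;> simp [Preadditive.add_comp] }
  exact ⟨_, by simpa [e] using σ.realize_iso 0 biprod.inl biprod.snd e (σ.realize_zero C₁ C₂)⟩

/-- A homotopy pullback: the middle term `M` is a realisation of `snd^* δ`, which contains `C₁`
as a summand because `inl^* snd^* δ = 0`. -/
lemma exists_conflation_of_pull {A C₁ C₂ : B} (δ : σ.Ext C₂ A) (c : C₁ ⟶ C₂) :
    ∃ (E M : B) (x : A ⟶ E) (y : E ⟶ C₁) (m : E ⟶ M) (d : M ⟶ C₂) (s : C₁ ⟶ M)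
      (r : M ⟶ C₁), σ.realize (σ.pull c δ) x y ∧ σ.Conflation m d ∧ s ≫ r = 𝟙 C₁ := by
  obtain ⟨M, m₀, e, hM⟩ := σ.realize_ex (σ.pull biprod.snd δ)
  obtain ⟨v₀, hsplit⟩ := realize_zero_lift_id (σ := σ) c
  obtain ⟨E, x, y, m, δ'', -, -, hconf, hre, -, -⟩ :=
    σ.et4op _ m₀ e 0 (biprod.lift (𝟙 C₁) c) v₀ hM hsplit
  obtain ⟨s, hs⟩ := exists_lift_of_pull_eq_zero hM biprod.inl
    (by rw [pull_pull, biprod.inl_snd, pull_zero_hom])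
  rw [pull_pull, biprod.lift_snd] at hre
  exact ⟨E, M, x, y, m, e ≫ v₀, s, e ≫ biprod.fst, hre, ⟨δ'', hconf⟩, by simp [reassoc_of% hs]⟩

end Pullback

section Star

variable (σ)

lemma star_mono {D₁ D₁' D₂ D₂' : Set B} (h₁ : D₁ ⊆ D₁') (h₂ : D₂ ⊆ D₂') :
    σ.star D₁ D₂ ⊆ σ.star D₁' D₂' :=
  fun _ ⟨A, C, f, g, hA, hC, hfg⟩ => ⟨A, C, f, g, h₁ hA, h₂ hC, hfg⟩

lemma star_assoc (D₁ D₂ D₃ : Set B) :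
    σ.star (σ.star D₁ D₂) D₃ = σ.star D₁ (σ.star D₂ D₃) := by
  ext X
  constructor
  · rintro ⟨Y, C, g, g', ⟨A, D, f, f', hA, hD, δ, hf⟩, hC, δ', hg⟩
    obtain ⟨E, d, e, h', δ'', -, -, hconf, hre, -, -⟩ := σ.et4 δ f f' δ' g g' hf hg
    exact ⟨A, E, f ≫ g, h', hA, ⟨D, C, d, e, hD, hC, _, hre⟩, δ'', hconf⟩
  · rintro ⟨F, Y, s, t, hF, ⟨D, A, u, v, hD, hA, δ, hu⟩, δ', hs⟩
    obtain ⟨E, e, d, m, δ'', -, -, hconf, hre, -, -⟩ := σ.et4op δ' s t δ u v hs hu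
    exact ⟨E, A, m, t ≫ v, ⟨F, D, e, d, hF, hD, _, hre⟩, hA, δ'', hconf⟩

/-- A conflation `D₂ ↣ X ↠ D₁` realises `0`, so `X ≅ D₁ ⊞ D₂` also sits in `D₁ ↣ X ↠ D₂`. -/
lemma star_subset_star_of_ext_vanish {D₁ D₂ : Set B}
    (h : ∀ ⦃X : B⦄, X ∈ D₁ → ∀ ⦃Y : B⦄, Y ∈ D₂ → ∀ δ : σ.Ext X Y, δ = 0) :
    σ.star D₂ D₁ ⊆ σ.star D₁ D₂ := by
  rintro X ⟨A, C, f, g, hA, hC, δ, hfg⟩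
  rw [h hC hA δ] at hfg
  obtain ⟨β, -, -⟩ := σ.realize_unique 0 f g biprod.inl biprod.snd hfg (σ.realize_zero A C)
  exact ⟨C, A, _, _, hC, hA, 0,
    σ.realize_iso 0 biprod.inl biprod.snd (biprod.braiding C A ≪≫ β.symm) (σ.realize_zero C A)⟩

end Star

section Cotorsion

variable {U V : Set B}

lemma mem_U_of_ext_vanish (cp : σ.IsCotorsionPair U V) {X : B}
    (hX : ∀ V₀ ∈ V, ∀ δ : σ.Ext X V₀, δ = 0) : X ∈ U := by
  obtain ⟨V₀, U₀, f, g, hV₀, hU₀, δ, hfg⟩ := cp.resolve X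
  rw [hX V₀ hV₀ δ] at hfg
  obtain ⟨s, hs⟩ := exists_section_of_realize_zero hfg
  exact cp.addU.summand_mem X U₀ hU₀ s g hs

lemma mem_V_of_ext_vanish (cp : σ.IsCotorsionPair U V) {X : B}
    (hX : ∀ U₀ ∈ U, ∀ δ : σ.Ext U₀ X, δ = 0) : X ∈ V := by
  obtain ⟨V₀, U₀, f, g, hV₀, hU₀, δ, hfg⟩ := cp.coresolve X
  rw [hX U₀ hU₀ δ] at hfg
  obtain ⟨r, hr⟩ := exists_retraction_of_realize_zero hfg
  exact cp.addV.summand_mem X V₀ hV₀ f r hr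

lemma mem_U_of_realize (cp : σ.IsCotorsionPair U V) {A X C : B} {δ : σ.Ext C A}
    {x : A ⟶ X} {y : X ⟶ C} (h : σ.realize δ x y) (hA : A ∈ U) (hC : C ∈ U) : X ∈ U := by
  refine mem_U_of_ext_vanish cp fun V₀ hV₀ ε => ?_
  obtain ⟨ε', rfl⟩ := exists_pull_eq_of_pull_eq_zero h ε (cp.ext_vanish hA hV₀ _)
  rw [cp.ext_vanish hC hV₀ ε', pull_zero]

lemma mem_V_of_realize (cp : σ.IsCotorsionPair U V) {A X C : B} {δ : σ.Ext C A}
    {x : A ⟶ X} {y : X ⟶ C} (h : σ.realize δ x y) (hA : A ∈ V) (hC : C ∈ V) : X ∈ V := by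
  refine mem_V_of_ext_vanish cp fun U₀ hU₀ ε => ?_
  obtain ⟨ε', rfl⟩ := exists_push_eq_of_push_eq_zero h ε (cp.ext_vanish hU₀ hC _)
  rw [cp.ext_vanish hU₀ hA ε', push_zero]

lemma IsCotorsionPair.addClosed_inter (cp : σ.IsCotorsionPair U V) : AddClosed (U ∩ V) where
  zero_mem Z h := ⟨cp.addU.zero_mem Z h, cp.addV.zero_mem Z h⟩
  biprod_mem X Y hX hY := ⟨cp.addU.biprod_mem X Y hX.1 hY.1, cp.addV.biprod_mem X Y hX.2 hY.2⟩
  summand_mem X Y hY s r hsr :=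
    ⟨cp.addU.summand_mem X Y hY.1 s r hsr, cp.addV.summand_mem X Y hY.2 s r hsr⟩

lemma mem_sPos_of_mem_V (cp : σ.IsCotorsionPair U V) {X : B} (hX : X ∈ V) :
    X ∈ σ.sPos U V := by
  obtain ⟨V₀, U₀, f, g, hV₀, hU₀, δ, hfg⟩ := cp.resolve X
  exact ⟨V₀, U₀, f, g, hV₀, ⟨hU₀, mem_V_of_realize cp hfg hV₀ hX⟩, δ, hfg⟩

lemma star_star_subset_star (cp : σ.IsCotorsionPair U V) :
    σ.star (σ.star U V) (σ.star U V) ⊆ σ.star U V := by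
  have hUU : σ.star U U ⊆ U := fun _ ⟨_, _, _, _, hA, hC, _, h⟩ => mem_U_of_realize cp h hA hC
  have hVV : σ.star V V ⊆ V := fun _ ⟨_, _, _, _, hA, hC, _, h⟩ => mem_V_of_realize cp h hA hC
  have hVU : σ.star V U ⊆ σ.star U V := σ.star_subset_star_of_ext_vanish cp.ext_vanish
  calc σ.star (σ.star U V) (σ.star U V)
      = σ.star (σ.star (σ.star U V) U) V := (σ.star_assoc _ _ _).symm
    _ = σ.star (σ.star U (σ.star V U)) V := by rw [σ.star_assoc U V U]
    _ ⊆ σ.star (σ.star U (σ.star U V)) V := σ.star_mono (σ.star_mono le_rfl hVU) le_rfl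
    _ = σ.star (σ.star (σ.star U U) V) V := by rw [σ.star_assoc U U V]
    _ ⊆ σ.star (σ.star U V) V := σ.star_mono (σ.star_mono hUU le_rfl) le_rfl
    _ = σ.star U (σ.star V V) := σ.star_assoc _ _ _
    _ ⊆ σ.star U V := σ.star_mono le_rfl hVV

lemma mem_addStar_of_retract {X Y : B} (hY : Y ∈ σ.addStar U V) (s : X ⟶ Y) (r : Y ⟶ X)
    (hsr : s ≫ r = 𝟙 X) : X ∈ σ.addStar U V := by
  obtain ⟨Z, hZ, s', r', hsr'⟩ := hY
  exact ⟨Z, hZ, s ≫ s', r' ≫ r, by simp [reassoc_of% hsr', hsr]⟩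

lemma mem_addStar_of_mem_star {X : B} (hX : X ∈ σ.star U V) : X ∈ σ.addStar U V :=
  ⟨X, hX, 𝟙 X, 𝟙 X, Category.id_comp _⟩

/-- Pull the conflation back along the retraction `C₁ ⟶ C`, then push it out along the section
`A ⟶ A₁`: each middle term is a retract of the next, and the last one lies in
`(U ∗ V) ∗ (U ∗ V)`. -/
lemma addStar_extension_closed (cp : σ.IsCotorsionPair U V) {A X C : B} {f : A ⟶ X}
    {g : X ⟶ C} (hfg : σ.Conflation f g) (hA : A ∈ σ.addStar U V)
    (hC : C ∈ σ.addStar U V) : X ∈ σ.addStar U V := by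
  obtain ⟨δ, h⟩ := hfg
  obtain ⟨A₁, hA₁, sA, rA, hsrA⟩ := hA
  obtain ⟨C₁, hC₁, sC, rC, hsrC⟩ := hC
  obtain ⟨X₂, x₂, y₂, h₂⟩ := σ.realize_ex (σ.pull rC δ)
  obtain ⟨X₃, x₃, y₃, h₃⟩ := σ.realize_ex (σ.push sA (σ.pull rC δ))
  obtain ⟨s₂, r₂, hsr₂⟩ := exists_retract_middle h h₂ (Category.id_comp (𝟙 A)) hsrC
    (by rw [push_id, pull_pull, hsrC, pull_id]) (by rw [push_id])
  obtain ⟨s₃, r₃, hsr₃⟩ := exists_retract_middle h₂ h₃ hsrA (Category.id_comp (𝟙 C₁))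
    (by rw [pull_id]) (by rw [push_push, hsrA, push_id, pull_id])
  have hX₃ : X₃ ∈ σ.star U V := star_star_subset_star cp ⟨A₁, C₁, x₃, y₃, hA₁, hC₁, _, h₃⟩
  exact mem_addStar_of_retract (mem_addStar_of_retract (mem_addStar_of_mem_star hX₃) s₃ r₃ hsr₃)
    s₂ r₂ hsr₂

end Cotorsion

section Heart

variable {U V : Set B}

lemma HeartFunctorData.isZero_H_obj_iff (hd : σ.HeartFunctorData U V) (X : B) :
    IsZero (hd.H.obj X) ↔
      IsZero (hd.corefl.σm.obj (hd.refl.σp.obj ((toQuot (U ∩ V)).obj X))) := by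
  have e := hd.iso.app X
  exact ⟨fun h => e.isZero_iff.1 ((σ.sHeartIncl U V).map_isZero h),
    fun h => IsZero.of_full_of_faithful_of_isZero (σ.sHeartIncl U V) _ (e.isZero_iff.2 h)⟩

lemma exists_sNeg_push_surjective (cp : σ.IsCotorsionPair U V) (Z : B) :
    ∃ Z' ∈ σ.sNeg U V, ∃ d : Z' ⟶ Z,
      ∀ ⦃U₀ : B⦄, U₀ ∈ U → ∀ τ : σ.Ext U₀ Z, ∃ μ : σ.Ext U₀ Z', σ.push d μ = τ := by
  obtain ⟨V₁, U₁, c, c', hV₁, hU₁, δ, hδ⟩ := cp.coresolve Z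
  obtain ⟨V₂, U₂, s, t, hV₂, hU₂, κ, hκ⟩ := cp.resolve V₁
  have hU₂V : U₂ ∈ V := mem_V_of_realize cp hκ hV₂ hV₁
  obtain ⟨Z', _, d, m, δ'', -, -, hconf, -, hpush, -⟩ := σ.et4op κ s t δ c c' hκ hδ
  refine ⟨Z', ⟨U₂, U₁, m, t ≫ c', ⟨hU₂, hU₂V⟩, hU₁, δ'', hconf⟩, d, fun U₀ hU₀ τ => ?_⟩
  obtain ⟨g, rfl⟩ := exists_eq_pull_of_push_eq_zero hδ τ (cp.ext_vanish hU₀ hV₁ _)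
  exact ⟨σ.pull g δ'', by rw [push_pull, hpush]⟩

lemma mem_V_iff_forall_hom_mem_wIdeal (cp : σ.IsCotorsionPair U V) {Z : B} :
    Z ∈ V ↔ ∀ N ∈ σ.sNeg U V, ∀ f : N ⟶ Z, f ∈ wIdeal (U ∩ V) N Z := by
  refine ⟨fun hZ N hN f => ?_, fun h => ?_⟩
  · obtain ⟨W₂, U₂, n, _, hW₂, hU₂, δ, hδ⟩ := hN
    obtain ⟨g, rfl⟩ := exists_extend_of_push_eq_zero hδ f (cp.ext_vanish hU₂ hZ _)
    exact mem_wIdeal_of_factor hW₂ n g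
  · obtain ⟨Z', hZ', d, hd⟩ := exists_sNeg_push_surjective cp Z
    obtain ⟨W₁, hW₁, p, q, rfl⟩ := (mem_wIdeal_iff cp.addClosed_inter d).1 (h Z' hZ' d)
    refine mem_V_of_ext_vanish cp fun U₀ hU₀ τ => ?_
    obtain ⟨μ, rfl⟩ := hd hU₀ τ
    rw [← push_push, cp.ext_vanish hU₀ hW₁.2 (σ.push p μ), push_zero]

/-- A reflection sequence `X ↣ Z ↠ U₀`; its middle term represents `σ⁺X` in `B/W`. -/
structure ReflSeq (σ : ExtStruct B) (U V : Set B) (X : B) where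
  Z : B
  U₀ : B
  z : X ⟶ Z
  w : Z ⟶ U₀
  δ : σ.Ext U₀ X
  hδ : σ.realize δ z w
  mem_U : U₀ ∈ U
  mem_sPos : Z ∈ σ.sPos U V
  pull_surjective : ∀ ⦃V₀ : B⦄, V₀ ∈ V → ∀ ρ : σ.Ext X V₀, ∃ μ : σ.Ext Z V₀, σ.pull z μ = ρ

/-- Coresolve `U_X`, then splice with a resolution of `X` by (ET4). -/
lemma exists_reflSeq (cp : σ.IsCotorsionPair U V) (X : B) : Nonempty (σ.ReflSeq U V X) := by
  obtain ⟨V₁, U₁, s, t, hV₁, hU₁, δ, hδ⟩ := cp.resolve X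
  obtain ⟨W₁, U₀, i, p, hW₁, hU₀, κ, hκ⟩ := cp.coresolve U₁
  have hW₁U : W₁ ∈ U := mem_U_of_realize cp hκ hU₁ hU₀
  obtain ⟨Z, z, w, h', δ'', -, -, hconf, hre, hpull, -⟩ := σ.et4 δ s t κ i p hδ hκ
  refine ⟨⟨Z, U₀, z, w, _, hre, hU₀, ⟨V₁, W₁, s ≫ i, h', hV₁, ⟨hW₁U, hW₁⟩, δ'', hconf⟩, ?_⟩⟩
  intro V₀ hV₀ ρ
  obtain ⟨g, rfl⟩ := exists_eq_push_of_pull_eq_zero hδ ρ (cp.ext_vanish hU₁ hV₀ _)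
  exact ⟨σ.push g δ'', by rw [← push_pull, hpull]⟩

lemma exists_reflSeq_mem_V_of_mem_star (cp : σ.IsCotorsionPair U V) {X : B}
    (hX : X ∈ σ.star U V) : ∃ R : σ.ReflSeq U V X, R.Z ∈ V := by
  obtain ⟨U₁, V₁, u, v, hU₁, hV₁, δ, hδ⟩ := hX
  obtain ⟨V₂, U₂, c, c', hV₂, hU₂, κ, hκ⟩ := cp.coresolve X
  refine ⟨⟨V₂, U₂, c, c', κ, hκ, hU₂, mem_sPos_of_mem_V cp hV₂, fun V₀ hV₀ ρ => ?_⟩, hV₂⟩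
  obtain ⟨ρ', rfl⟩ := exists_pull_eq_of_pull_eq_zero hδ ρ (cp.ext_vanish hU₁ hV₀ _)
  obtain ⟨v', hv'⟩ := exists_extend_of_push_eq_zero hκ v (cp.ext_vanish hU₂ hV₁ _)
  exact ⟨σ.pull v' ρ', by rw [pull_pull, hv']⟩

namespace ReflSeq

variable {X : B} (R : σ.ReflSeq U V X)

/-- `f_* δ` factors through `E(U₀, W₀) = 0`, so `f` extends along the inflation `z`. -/
lemma exists_lift (cp : σ.IsCotorsionPair U V) {Y : B} (hY : Y ∈ σ.sPos U V) (f : X ⟶ Y) :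
    ∃ g : R.Z ⟶ Y, R.z ≫ g = f := by
  obtain ⟨V₀, W₀, a, b, hV₀, hW₀, θ, hθ⟩ := hY
  obtain ⟨μ, hμ⟩ := R.pull_surjective hV₀ (σ.pull f θ)
  obtain ⟨M, m, e, hM⟩ := σ.realize_ex μ
  obtain ⟨_, e', d, _, δ'', -, -, -, hre, hpush, -⟩ := σ.et4op μ m e R.δ R.z R.w hM R.hδ
  rw [hμ] at hre
  obtain ⟨b₁, -, hb₁⟩ := σ.realize_map _ θ e' d a b (𝟙 V₀) f hre hθ (by simp)
  refine exists_extend_of_push_eq_zero R.hδ f ?_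
  rw [← hpush, push_push, hb₁, ← push_push, cp.ext_vanish R.mem_U hW₀.2 (σ.push b₁ δ''),
    push_zero]

lemma mem_wIdeal_of_comp_mem_wIdeal (cp : σ.IsCotorsionPair U V) {Y : B}
    (hY : Y ∈ σ.sPos U V) (g : R.Z ⟶ Y) (hg : R.z ≫ g ∈ wIdeal (U ∩ V) X Y) :
    g ∈ wIdeal (U ∩ V) R.Z Y := by
  obtain ⟨V₀, W₀, a, b, hV₀, hW₀, θ, hθ⟩ := hY
  obtain ⟨W₁, hW₁, p, q, hpq⟩ := (mem_wIdeal_iff cp.addClosed_inter _).1 hg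
  obtain ⟨p', hp'⟩ := exists_extend_of_push_eq_zero R.hδ p (cp.ext_vanish R.mem_U hW₁.2 _)
  obtain ⟨ψ, hψ⟩ := exists_desc_of_comp_eq_zero R.hδ (g - p' ≫ q)
    (by rw [Preadditive.comp_sub, reassoc_of% hp', ← hpq, sub_self])
  obtain ⟨ψ', hψ'⟩ := exists_lift_of_pull_eq_zero hθ ψ (cp.ext_vanish R.mem_U hV₀ _)
  have hg : g = p' ≫ q + (R.w ≫ ψ') ≫ b := by rw [Category.assoc, hψ', hψ]; abel
  rw [hg]
  exact add_mem (mem_wIdeal_of_factor hW₁ p' q) (mem_wIdeal_of_factor hW₀ _ b)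

lemma bijective_precomp (cp : σ.IsCotorsionPair U V) (Y : QuotCat (U ∩ V))
    (hY : Y.as ∈ σ.sPos U V) :
    Function.Bijective fun g : (toQuot (U ∩ V)).obj R.Z ⟶ Y => (toQuot (U ∩ V)).map R.z ≫ g := by
  refine ⟨fun g g' hgg' => ?_, fun F => ?_⟩
  · obtain ⟨g, rfl⟩ := (toQuot (U ∩ V)).map_surjective g
    obtain ⟨g', rfl⟩ := (toQuot (U ∩ V)).map_surjective g'
    simp only [← Functor.map_comp] at hgg'
    rw [Quotient.functor_map_eq_iff] at hgg' ⊢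
    refine R.mem_wIdeal_of_comp_mem_wIdeal cp hY (g - g') ?_
    rw [Preadditive.comp_sub]
    exact hgg'
  · obtain ⟨f, rfl⟩ := (toQuot (U ∩ V)).map_surjective F
    obtain ⟨g, rfl⟩ := R.exists_lift cp hY f
    exact ⟨(toQuot (U ∩ V)).map g, ((toQuot (U ∩ V)).map_comp _ _).symm⟩

lemma isZero_H_obj_iff_mem_V (cp : σ.IsCotorsionPair U V) (hd : σ.HeartFunctorData U V) :
    IsZero (hd.H.obj X) ↔ R.Z ∈ V := by
  obtain ⟨e⟩ := hd.refl.nonempty_iso R.mem_sPos _ (R.bijective_precomp cp)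
  rw [hd.isZero_H_obj_iff, (hd.corefl.σm.mapIso e).isZero_iff, hd.corefl.isZero_obj_iff,
    forall_toQuot_hom_eq_zero_iff, mem_V_iff_forall_hom_mem_wIdeal cp]

/-- Realise a preimage `μ ∈ E(Z, V_X)` of the resolution `V_X ↣ U_X ↠ X` of `X` and pull it back
along `z`: this yields `U_X ↣ M ↠ Z` with `X` a summand of `M`. -/
lemma mem_addStar (cp : σ.IsCotorsionPair U V) (hZ : R.Z ∈ V) : X ∈ σ.addStar U V := by
  obtain ⟨V₁, U₁, _, _, hV₁, hU₁, δ, hδ⟩ := cp.resolve X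
  obtain ⟨μ, rfl⟩ := R.pull_surjective hV₁ δ
  obtain ⟨E, M, x, y, m, d, s, r, hxy, hmd, hsr⟩ := exists_conflation_of_pull μ R.z
  obtain ⟨β, -, -⟩ := σ.realize_unique _ x y _ _ hxy hδ
  have hE : E ∈ U := cp.addU.summand_mem E U₁ hU₁ β.hom β.inv β.hom_inv_id
  exact mem_addStar_of_retract (mem_addStar_of_mem_star ⟨E, R.Z, m, d, hE, hZ, hmd⟩) s r hsr

end ReflSeq

end Heart

end ExtStruct

/-- Corollary 3.8 / `8.14`. Let `(U,V)` be a cotorsion pair with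
associated cohomological functor `H : B ⟶ H̄`.  For any object `X ∈ B`, `H(X) = 0` if and
only if `X ∈ add(U ∗ V)`.  In particular, `add(U ∗ V)` is extension-closed in `B`. -/
theorem statement_11 {B : Type u} [Category.{v} B] [Preadditive B] [HasFiniteBiproducts B]
    (σ : ExtStruct B) {U V : Set B} (cp : σ.IsCotorsionPair U V)
    (hd : σ.HeartFunctorData U V) :
    (∀ X : B, IsZero (hd.H.obj X) ↔ X ∈ σ.addStar U V) ∧
    (∀ ⦃A X C : B⦄ (f : A ⟶ X) (g : X ⟶ C), σ.Conflation f g →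
      A ∈ σ.addStar U V → C ∈ σ.addStar U V → X ∈ σ.addStar U V) := by
  refine ⟨fun X => ⟨fun hX => ?_, fun hX => ?_⟩,
    fun _ _ _ _ _ hfg hA hC => ExtStruct.addStar_extension_closed cp hfg hA hC⟩
  · obtain ⟨R⟩ := ExtStruct.exists_reflSeq cp X
    exact R.mem_addStar cp ((R.isZero_H_obj_iff_mem_V cp hd).1 hX)
  · obtain ⟨Y, hY, s, r, hsr⟩ := hX
    obtain ⟨R, hZ⟩ := ExtStruct.exists_reflSeq_mem_V_of_mem_star cp hY
    have : IsSplitMono (hd.H.map s) :=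
      .mk' ⟨hd.H.map r, by rw [← hd.H.map_comp, hsr, hd.H.map_id]⟩
    exact IsZero.of_mono (hd.H.map s) ((R.isZero_H_obj_iff_mem_V cp hd).2 hZ)

end ExtriHearts
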